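/- arXiv:1704.04089 — 2 statements merged into one kernel-verified Lean document; each statement's English description precedes it below -/
import Mathlib

section
/- (Feldman–Propp) Let C be a nonempty finite set and Γ a subgroup of the symmetric group S(C). Then Γ is finitely cancelling if and only if Γ has a globally fixed point, i.e., there exists c ∈ C with γ(c) = c for every γ ∈ Γ. -/
/-- The transformed bijection `f_{α,β,γ}(a,c) = (β × γ)(f(α⁻¹ a, γ⁻¹ c))`. -/
def transform {A B C : Type} (f : A × C ≃ B × C)
    (α : Equiv.Perm A) (β : Equiv.Perm B) (γ : Equiv.Perm C) : A × C ≃ B × C :=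
  ((Equiv.prodCongr α γ).symm.trans f).trans (Equiv.prodCongr β γ)

/-- The transformed quotient `h_{α,β}(a) = β(h(α⁻¹ a))`. -/
def transformQ {A B : Type} (h : A ≃ B) (α : Equiv.Perm A) (β : Equiv.Perm B) : A ≃ B :=
  (α.symm.trans h).trans β

/-- `h : A ≃ B` is a `Γ`-equivariant quotient of `f : A × C ≃ B × C`. -/
def IsEquivQuotient {C : Type} (Γ : Subgroup (Equiv.Perm C)) {A B : Type}
    (f : A × C ≃ B × C) (h : A ≃ B) : Prop :=
  ∀ (α : Equiv.Perm A) (β : Equiv.Perm B) (γ : Equiv.Perm C), γ ∈ Γ →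
    transform f α β γ = f → transformQ h α β = h

/-- `Γ` is fully cancelling: every bijection `f : A × C ≃ B × C` has a
`Γ`-equivariant quotient. -/
def FullyCancelling (C : Type) (Γ : Subgroup (Equiv.Perm C)) : Prop :=
  ∀ (A B : Type) (f : A × C ≃ B × C), ∃ h : A ≃ B, IsEquivQuotient Γ f h

/-- `Γ` is finitely cancelling: every bijection `f : A × C ≃ B × C` with `A`, `B`
finite has a `Γ`-equivariant quotient. -/
def FinitelyCancelling (C : Type) (Γ : Subgroup (Equiv.Perm C)) : Prop :=
  ∀ (A B : Type), Finite A → Finite B →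
    ∀ (f : A × C ≃ B × C), ∃ h : A ≃ B, IsEquivQuotient Γ f h


open MulAction

variable {G : Type} [Group G]

/-- Points fixed by every element of `S`. -/
def fixPts (S : Set G) (X : Type) [MulAction G X] : Set X := {x | ∀ g ∈ S, g • x = x}

lemma fixPts_empty (X : Type) [MulAction G X] : fixPts (∅ : Set G) X = Set.univ := by
  ext x; simp [fixPts]

/-- An equivariant bijection restricts to fixed points. -/
def fixEquiv {X Y : Type} [MulAction G X] [MulAction G Y] (e : X ≃ Y)
    (he : ∀ (g : G) (x : X), e (g • x) = g • e x) (S : Set G) :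
    ↥(fixPts S X) ≃ ↥(fixPts S Y) where
  toFun x := ⟨e x, fun g hg => by rw [← he]; exact congrArg e (x.2 g hg)⟩
  invFun y := ⟨e.symm y, fun g hg => e.injective (by simp [he, y.2 g hg])⟩
  left_inv x := Subtype.ext (e.symm_apply_apply x)
  right_inv y := Subtype.ext (e.apply_symm_apply y)

lemma smul_transfer {X Y : Type} [MulAction G X] [MulAction G Y] {x₀ : X} {y₀ : Y}
    (hco : ∀ g : G, g • x₀ = x₀ ↔ g • y₀ = y₀) {g g' : G} (h : g • x₀ = g' • x₀) :
    g • y₀ = g' • y₀ := by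
  have h1 : (g'⁻¹ * g) • x₀ = x₀ := by rw [mul_smul, h, inv_smul_smul]
  have h2 := (hco _).mp h1
  calc g • y₀ = g' • (g'⁻¹ • (g • y₀)) := (smul_inv_smul g' _).symm
    _ = g' • ((g'⁻¹ * g) • y₀) := by rw [mul_smul]
    _ = g' • y₀ := by rw [h2]

lemma orbit_equiv {X Y : Type} [MulAction G X] [MulAction G Y] (x₀ : X) (y₀ : Y)
    (hco : ∀ g : G, g • x₀ = x₀ ↔ g • y₀ = y₀) :
    ∃ e : ↥(orbit G x₀) ≃ ↥(orbit G y₀),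
      ∀ (g : G) (z : X) (hz : z ∈ orbit G x₀) (hgz : g • z ∈ orbit G x₀),
        (e ⟨g • z, hgz⟩ : Y) = g • (e ⟨z, hz⟩ : Y) := by
  have hco' : ∀ g : G, g • y₀ = y₀ ↔ g • x₀ = x₀ := fun g => (hco g).symm
  let u : ↥(orbit G x₀) → ↥(orbit G y₀) := fun z =>
    ⟨(Classical.choose (mem_orbit_iff.mp z.2)) • y₀, mem_orbit _ _⟩
  let v : ↥(orbit G y₀) → ↥(orbit G x₀) := fun z =>
    ⟨(Classical.choose (mem_orbit_iff.mp z.2)) • x₀, mem_orbit _ _⟩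
  have k1 : ∀ (g : G) (h : g • x₀ ∈ orbit G x₀), (u ⟨g • x₀, h⟩ : Y) = g • y₀ := by
    intro g h
    exact smul_transfer hco (Classical.choose_spec (mem_orbit_iff.mp h))
  have k2 : ∀ (g : G) (h : g • y₀ ∈ orbit G y₀), (v ⟨g • y₀, h⟩ : X) = g • x₀ := by
    intro g h
    exact smul_transfer hco' (Classical.choose_spec (mem_orbit_iff.mp h))
  have hu : Function.LeftInverse v u := by
    rintro ⟨z, hz⟩
    obtain ⟨g, rfl⟩ := mem_orbit_iff.mp hz
    have h1 : u ⟨g • x₀, hz⟩ = ⟨g • y₀, mem_orbit _ _⟩ := Subtype.ext (k1 g hz)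
    rw [h1]
    exact Subtype.ext (k2 g _)
  have hv : Function.RightInverse v u := by
    rintro ⟨z, hz⟩
    obtain ⟨g, rfl⟩ := mem_orbit_iff.mp hz
    have h1 : v ⟨g • y₀, hz⟩ = ⟨g • x₀, mem_orbit _ _⟩ := Subtype.ext (k2 g hz)
    rw [h1]
    exact Subtype.ext (k1 g _)
  refine ⟨⟨u, v, hu, hv⟩, ?_⟩
  intro g z hz hgz
  obtain ⟨g₁, rfl⟩ := mem_orbit_iff.mp hz
  have h2 : (⟨g • g₁ • x₀, hgz⟩ : ↥(orbit G x₀)) = ⟨(g * g₁) • x₀, by rw [mul_smul]; exact hgz⟩ :=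
    Subtype.ext (mul_smul g g₁ x₀).symm
  show (u ⟨g • g₁ • x₀, hgz⟩ : Y) = g • (u ⟨g₁ • x₀, hz⟩ : Y)
  rw [h2, k1 (g * g₁) _, k1 g₁ hz, mul_smul]

/-- fixed points inside a SubMulAction correspond to ambient fixed points in the carrier. -/
def fixSubEquiv {X : Type} [MulAction G X] (p : SubMulAction G X) (S : Set G) :
    ↥(fixPts S ↥p) ≃ ↥(fixPts S X ∩ ↑p) where
  toFun z := ⟨↑z.1, ⟨fun g hg => by
      have := z.2 g hg
      rw [← SubMulAction.val_smul, this], z.1.2⟩⟩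
  invFun w := ⟨⟨w.1, w.2.2⟩, fun g hg => Subtype.ext (by
      rw [SubMulAction.val_smul]; exact w.2.1 g hg)⟩
  left_inv z := rfl
  right_inv w := rfl

theorem exists_equivariant_equiv [Finite G] :
    ∀ (n : ℕ) (X Y : Type) [Finite X] [Finite Y] [MulAction G X] [MulAction G Y],
      Nat.card X = n → (∀ S : Set G, (fixPts S X).ncard = (fixPts S Y).ncard) →
      ∃ e : X ≃ Y, ∀ (g : G) (x : X), e (g • x) = g • e x := by
  intro n
  induction n using Nat.strong_induction_on with
  | _ n IH =>
  intro X Y _ _ _ _ hn hfix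
  have hcard : Nat.card X = Nat.card Y := by
    have := hfix ∅
    rwa [fixPts_empty, fixPts_empty, Set.ncard_univ, Set.ncard_univ] at this
  rcases Nat.eq_zero_or_pos n with h0 | hpos
  · subst h0
    have hX : IsEmpty X := by
      rcases Nat.card_eq_zero.mp hn with h | h
      · exact h
      · exact absurd h (not_infinite_iff_finite.mpr ‹_›)
    have hY : IsEmpty Y := by
      rcases Nat.card_eq_zero.mp (hcard ▸ hn) with h | h
      · exact h
      · exact absurd h (not_infinite_iff_finite.mpr ‹_›)
    exact ⟨Equiv.equivOfIsEmpty X Y, fun g x => isEmptyElim x⟩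
  have hXne : Nonempty X := (Nat.card_pos_iff.mp (hn ▸ hpos)).1
  have hYne : Nonempty Y := (Nat.card_pos_iff.mp ((hcard ▸ hn : Nat.card Y = n) ▸ hpos)).1
  classical
  -- choose a point with stabilizer of maximal size among X ⊕ Y
  let st : X ⊕ Y → Set G := Sum.elim (fun x => (stabilizer G x : Set G))
    (fun y => (stabilizer G y : Set G))
  obtain ⟨w₀, hw₀⟩ := Finite.exists_max (fun w : X ⊕ Y => (st w).ncard)
  set H : Set G := st w₀ with hH
  have hkey : (fixPts H X).Nonempty ∨ (fixPts H Y).Nonempty := by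
    cases w₀ with
    | inl x => exact Or.inl ⟨x, fun g hg => mem_stabilizer_iff.mp hg⟩
    | inr y => exact Or.inr ⟨y, fun g hg => mem_stabilizer_iff.mp hg⟩
  have hfixH := hfix H
  have hXfix : (fixPts H X).Nonempty := by
    rcases hkey with h | h
    · exact h
    · rw [← Set.ncard_pos (Set.toFinite _), hfixH, Set.ncard_pos (Set.toFinite _)]
      exact h
  have hYfix : (fixPts H Y).Nonempty := by
    rcases hkey with h | h
    · rw [← Set.ncard_pos (Set.toFinite _), ← hfixH, Set.ncard_pos (Set.toFinite _)]
      exact h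
    · exact h
  obtain ⟨x₀, hx₀⟩ := hXfix
  obtain ⟨y₀, hy₀⟩ := hYfix
  have hx : H = (stabilizer G x₀ : Set G) :=
    Set.eq_of_subset_of_ncard_le (fun g hg => mem_stabilizer_iff.mpr (hx₀ g hg))
      (hw₀ (Sum.inl x₀))
  have hy : H = (stabilizer G y₀ : Set G) :=
    Set.eq_of_subset_of_ncard_le (fun g hg => mem_stabilizer_iff.mpr (hy₀ g hg))
      (hw₀ (Sum.inr y₀))
  have hco : ∀ g : G, g • x₀ = x₀ ↔ g • y₀ = y₀ := by
    intro g
    have : g ∈ (stabilizer G x₀ : Set G) ↔ g ∈ (stabilizer G y₀ : Set G) := by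
      rw [← hx, ← hy]
    simpa [mem_stabilizer_iff] using this
  obtain ⟨e₁, he₁⟩ := orbit_equiv x₀ y₀ hco
  -- complements as SubMulActions
  have hinvx : ∀ (c : G) {x : X}, x ∈ (orbit G x₀)ᶜ → c • x ∈ (orbit G x₀)ᶜ := by
    intro c x hx hmem
    obtain ⟨g, hg⟩ := mem_orbit_iff.mp hmem
    exact hx (mem_orbit_iff.mpr ⟨c⁻¹ * g, by rw [mul_smul, hg, inv_smul_smul]⟩)
  have hinvy : ∀ (c : G) {y : Y}, y ∈ (orbit G y₀)ᶜ → c • y ∈ (orbit G y₀)ᶜ := by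
    intro c y hy hmem
    obtain ⟨g, hg⟩ := mem_orbit_iff.mp hmem
    exact hy (mem_orbit_iff.mpr ⟨c⁻¹ * g, by rw [mul_smul, hg, inv_smul_smul]⟩)
  let px : SubMulAction G X := ⟨(orbit G x₀)ᶜ, fun {c x} h => hinvx c h⟩
  let py : SubMulAction G Y := ⟨(orbit G y₀)ᶜ, fun {c y} h => hinvy c h⟩
  -- fixed points transfer along e₁
  have horbinv : ∀ (g : G) (z : X), z ∈ orbit G x₀ → g • z ∈ orbit G x₀ := by
    intro g z hz
    obtain ⟨g₁, hg₁⟩ := mem_orbit_iff.mp hz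
    exact mem_orbit_iff.mpr ⟨g * g₁, by rw [mul_smul, hg₁]⟩
  have hfixiff : ∀ (S : Set G) (z : ↥(orbit G x₀)),
      ((z : X) ∈ fixPts S X) ↔ ((e₁ z : Y) ∈ fixPts S Y) := by
    intro S z
    constructor
    · intro hz g hg
      have hgz : g • (z : X) ∈ orbit G x₀ := by rw [hz g hg]; exact z.2
      have h2 := he₁ g (z : X) z.2 hgz
      rw [show (⟨g • (z : X), hgz⟩ : ↥(orbit G x₀)) = z from Subtype.ext (hz g hg),
        Subtype.coe_eta] at h2
      exact h2.symm
    · intro hz g hg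
      have hgz : g • (z : X) ∈ orbit G x₀ := horbinv g (z : X) z.2
      have h2 := he₁ g (z : X) z.2 hgz
      rw [Subtype.coe_eta, hz g hg] at h2
      have h3 : (⟨g • (z : X), hgz⟩ : ↥(orbit G x₀)) = z := e₁.injective (Subtype.ext h2)
      exact congrArg Subtype.val h3
  have horb : ∀ S : Set G,
      (fixPts S X ∩ orbit G x₀).ncard = (fixPts S Y ∩ orbit G y₀).ncard := by
    intro S
    rw [← Nat.card_coe_set_eq, ← Nat.card_coe_set_eq]
    refine Nat.card_congr ?_
    refine (Equiv.setCongr (Set.inter_comm _ _)).trans ?_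
    refine ((Equiv.subtypeSubtypeEquivSubtypeInter _ _).symm.trans ?_).trans
      ((Equiv.subtypeSubtypeEquivSubtypeInter (· ∈ orbit G y₀) (· ∈ fixPts S Y)).trans
        (Equiv.setCongr (Set.inter_comm _ _)))
    exact e₁.subtypeEquiv (fun z => hfixiff S z)
  have hcomplfix : ∀ S : Set G, (fixPts S ↥px).ncard = (fixPts S ↥py).ncard := by
    intro S
    have hx' := Set.ncard_inter_add_ncard_diff_eq_ncard (fixPts S X) (orbit G x₀)
      (Set.toFinite _)
    have hy' := Set.ncard_inter_add_ncard_diff_eq_ncard (fixPts S Y) (orbit G y₀)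
      (Set.toFinite _)
    have hdx : (fixPts S ↥px).ncard = (fixPts S X \ orbit G x₀).ncard := by
      rw [← Nat.card_coe_set_eq, ← Nat.card_coe_set_eq]
      exact Nat.card_congr ((fixSubEquiv px S).trans (Equiv.setCongr (by
        rw [Set.diff_eq]; rfl)))
    have hdy : (fixPts S ↥py).ncard = (fixPts S Y \ orbit G y₀).ncard := by
      rw [← Nat.card_coe_set_eq, ← Nat.card_coe_set_eq]
      exact Nat.card_congr ((fixSubEquiv py S).trans (Equiv.setCongr (by
        rw [Set.diff_eq]; rfl)))
    have := hfix S
    have := horb S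
    omega
  -- the complement is strictly smaller
  have hsz : Nat.card ↥px < n := by
    have h1 : (orbit G x₀).ncard + (orbit G x₀)ᶜ.ncard = Nat.card X :=
      Set.ncard_add_ncard_compl _
    have h2 : 0 < (orbit G x₀).ncard :=
      (Set.ncard_pos (Set.toFinite _)).mpr ⟨x₀, mem_orbit_self x₀⟩
    have h3 : Nat.card ↥px = (orbit G x₀)ᶜ.ncard := Nat.card_coe_set_eq _
    omega
  obtain ⟨e₂, he₂⟩ := IH (Nat.card ↥px) hsz ↥px ↥py rfl hcomplfix
  -- assemble the global equivalence
  have hmem1 : ∀ z : ↥(orbit G x₀), (e₁ z : Y) ∈ orbit G y₀ := fun z => (e₁ z).2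
  have hmem2 : ∀ z : ↥px, (e₂ z : Y) ∉ orbit G y₀ := fun z => (e₂ z).2
  have hmem1' : ∀ z : ↥(orbit G y₀), (e₁.symm z : X) ∈ orbit G x₀ := fun z => (e₁.symm z).2
  have hmem2' : ∀ z : ↥py, (e₂.symm z : X) ∉ orbit G x₀ := fun z => (e₂.symm z).2
  let EF : X → Y := fun x =>
    if hx : x ∈ orbit G x₀ then ↑(e₁ ⟨x, hx⟩) else ↑(e₂ ⟨x, hx⟩)
  let EG : Y → X := fun y =>
    if hy : y ∈ orbit G y₀ then ↑(e₁.symm ⟨y, hy⟩) else ↑(e₂.symm ⟨y, hy⟩)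
  have hEF1 : ∀ (x : X) (hx : x ∈ orbit G x₀), EF x = ↑(e₁ ⟨x, hx⟩) := by
    intro x hx; simp only [EF, dif_pos hx]
  have hEF2 : ∀ (x : X) (hx : x ∉ orbit G x₀), EF x = ↑(e₂ ⟨x, hx⟩) := by
    intro x hx; simp only [EF, dif_neg hx]
  have hEG1 : ∀ (y : Y) (hy : y ∈ orbit G y₀), EG y = ↑(e₁.symm ⟨y, hy⟩) := by
    intro y hy; simp only [EG, dif_pos hy]
  have hEG2 : ∀ (y : Y) (hy : y ∉ orbit G y₀), EG y = ↑(e₂.symm ⟨y, hy⟩) := by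
    intro y hy; simp only [EG, dif_neg hy]
  have hli : Function.LeftInverse EG EF := by
    intro x
    by_cases hx : x ∈ orbit G x₀
    · rw [hEF1 x hx, hEG1 _ (hmem1 _)]
      have : (⟨↑(e₁ ⟨x, hx⟩), hmem1 _⟩ : ↥(orbit G y₀)) = e₁ ⟨x, hx⟩ := Subtype.ext rfl
      rw [this, Equiv.symm_apply_apply]
    · rw [hEF2 x hx, hEG2 _ (hmem2 _)]
      have : (⟨↑(e₂ ⟨x, hx⟩), hmem2 _⟩ : ↥py) = e₂ ⟨x, hx⟩ := Subtype.ext rfl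
      rw [this, Equiv.symm_apply_apply]
  have hri : Function.RightInverse EG EF := by
    intro y
    by_cases hy : y ∈ orbit G y₀
    · rw [hEG1 y hy, hEF1 _ (hmem1' _)]
      have : (⟨↑(e₁.symm ⟨y, hy⟩), hmem1' _⟩ : ↥(orbit G x₀)) = e₁.symm ⟨y, hy⟩ :=
        Subtype.ext rfl
      rw [this, Equiv.apply_symm_apply]
    · rw [hEG2 y hy, hEF2 _ (hmem2' _)]
      have : (⟨↑(e₂.symm ⟨y, hy⟩), hmem2' _⟩ : ↥px) = e₂.symm ⟨y, hy⟩ := Subtype.ext rfl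
      rw [this, Equiv.apply_symm_apply]
  refine ⟨⟨EF, EG, hli, hri⟩, ?_⟩
  intro g x
  show EF (g • x) = g • EF x
  by_cases hx : x ∈ orbit G x₀
  · have hgx : g • x ∈ orbit G x₀ := horbinv g x hx
    rw [hEF1 _ hgx, hEF1 _ hx]
    exact he₁ g x hx hgx
  · have hgx : g • x ∉ orbit G x₀ := hinvx g hx
    rw [hEF2 _ hgx, hEF2 _ hx]
    have h4 : (⟨g • x, hgx⟩ : ↥px) = g • (⟨x, hx⟩ : ↥px) := Subtype.ext rfl
    rw [h4, he₂ g ⟨x, hx⟩, SubMulAction.val_smul]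

/-- Fixed points of a product action. -/
def fixProdEquiv {X Y : Type} [MulAction G X] [MulAction G Y] (S : Set G) :
    ↥(fixPts S (X × Y)) ≃ ↥(fixPts S X) × ↥(fixPts S Y) where
  toFun x := (⟨x.1.1, fun g hg => congrArg Prod.fst (x.2 g hg)⟩,
    ⟨x.1.2, fun g hg => congrArg Prod.snd (x.2 g hg)⟩)
  invFun p := ⟨(p.1.1, p.2.1), fun g hg => Prod.ext (p.1.2 g hg) (p.2.2 g hg)⟩
  left_inv x := rfl
  right_inv p := rfl

-- now the `transform` algebra
def transform' {A B C : Type} (f : A × C ≃ B × C)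
    (α : Equiv.Perm A) (β : Equiv.Perm B) (γ : Equiv.Perm C) : A × C ≃ B × C :=
  ((Equiv.prodCongr α γ).symm.trans f).trans (Equiv.prodCongr β γ)

lemma transform'_apply {A B C : Type} (f : A × C ≃ B × C) (α β γ) (a : A) (c : C) :
    transform' f α β γ (a, c) =
      (β (f (α.symm a, γ.symm c)).1, γ (f (α.symm a, γ.symm c)).2) := by
  simp [transform', Equiv.prodCongr_apply, Prod.map]

lemma transform'_one {A B C : Type} (f : A × C ≃ B × C) : transform' f 1 1 1 = f := by
  apply Equiv.ext
  rintro ⟨a, c⟩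
  simp [transform'_apply, Equiv.Perm.one_symm]

lemma transform'_mul {A B C : Type} (f : A × C ≃ B × C) (α₁ α₂ β₁ β₂ γ₁ γ₂) :
    transform' f (α₁ * α₂) (β₁ * β₂) (γ₁ * γ₂) =
      transform' (transform' f α₂ β₂ γ₂) α₁ β₁ γ₁ := by
  apply Equiv.ext
  rintro ⟨a, c⟩
  simp [transform'_apply, ← Equiv.Perm.inv_def, mul_inv_rev, Equiv.Perm.mul_apply]

def symGroup' {A B C : Type} (Γ : Subgroup (Equiv.Perm C)) (f : A × C ≃ B × C) :
    Subgroup (Equiv.Perm A × Equiv.Perm B × Equiv.Perm C) where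
  carrier := {p | p.2.2 ∈ Γ ∧ transform' f p.1 p.2.1 p.2.2 = f}
  one_mem' := ⟨Γ.one_mem, transform'_one f⟩
  mul_mem' := by
    rintro p q ⟨hq1, hq2⟩ ⟨hp1, hp2⟩
    refine ⟨Γ.mul_mem hq1 hp1, ?_⟩
    show transform' f (p.1 * q.1) (p.2.1 * q.2.1) (p.2.2 * q.2.2) = f
    rw [transform'_mul, hp2, hq2]
  inv_mem' := by
    rintro p ⟨hp1, hp2⟩
    refine ⟨Γ.inv_mem hp1, ?_⟩
    show transform' f p.1⁻¹ p.2.1⁻¹ p.2.2⁻¹ = f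
    calc transform' f p.1⁻¹ p.2.1⁻¹ p.2.2⁻¹
        = transform' (transform' f p.1 p.2.1 p.2.2) p.1⁻¹ p.2.1⁻¹ p.2.2⁻¹ := by rw [hp2]
      _ = transform' f (p.1⁻¹ * p.1) (p.2.1⁻¹ * p.2.1) (p.2.2⁻¹ * p.2.2) :=
          (transform'_mul f _ _ _ _ _ _).symm
      _ = f := by rw [inv_mul_cancel, inv_mul_cancel, inv_mul_cancel, transform'_one]

theorem dir1 {C : Type} [Finite C] (Γ : Subgroup (Equiv.Perm C))
    (hc : ∃ c : C, ∀ γ ∈ Γ, γ c = c) (A B : Type) (hA : Finite A) (hB : Finite B)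
    (f : A × C ≃ B × C) :
    ∃ h : A ≃ B, ∀ (α : Equiv.Perm A) (β : Equiv.Perm B) (γ : Equiv.Perm C), γ ∈ Γ →
      transform' f α β γ = f → (α.symm.trans h).trans β = h := by
  obtain ⟨c₀, hc₀⟩ := hc
  set K := symGroup' Γ f with hK
  letI iA : MulAction ↥K A :=
    { smul := fun k a => k.1.1 a, one_smul := fun a => rfl, mul_smul := fun k l a => rfl }
  letI iB : MulAction ↥K B :=
    { smul := fun k b => k.1.2.1 b, one_smul := fun b => rfl, mul_smul := fun k l b => rfl }
  letI iC : MulAction ↥K C :=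
    { smul := fun k c => k.1.2.2 c, one_smul := fun c => rfl, mul_smul := fun k l c => rfl }
  have hf : ∀ (k : ↥K) (x : A × C), f (k • x) = k • f x := by
    rintro ⟨⟨α, β, γ⟩, hk⟩ ⟨a, c⟩
    have h2 : transform' f α β γ = f := hk.2
    have h3 := congrArg (fun e : A × C ≃ B × C => e (α a, γ c)) h2
    simp only [transform'_apply, Equiv.symm_apply_apply] at h3
    exact h3.symm
  have hfixC : ∀ S : Set ↥K, c₀ ∈ fixPts S C := fun S k _ => hc₀ k.1.2.2 k.2.1
  have hmain : ∀ S : Set ↥K, (fixPts S A).ncard = (fixPts S B).ncard := by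
    intro S
    have e3 := fixProdEquiv (X := A) (Y := C) S
    have e3' := fixProdEquiv (X := B) (Y := C) S
    have e4 := fixEquiv f hf S
    have hcards : Nat.card ↥(fixPts S A) * Nat.card ↥(fixPts S C) =
        Nat.card ↥(fixPts S B) * Nat.card ↥(fixPts S C) := by
      rw [← Nat.card_prod, ← Nat.card_prod]
      exact Nat.card_congr (e3.symm.trans (e4.trans e3'))
    haveI : Nonempty ↥(fixPts S C) := ⟨⟨c₀, hfixC S⟩⟩
    have hpos : 0 < Nat.card ↥(fixPts S C) := Nat.card_pos
    have := Nat.eq_of_mul_eq_mul_right hpos hcards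
    rwa [Nat.card_coe_set_eq, Nat.card_coe_set_eq] at this
  obtain ⟨h, hh⟩ := exists_equivariant_equiv (G := ↥K) (Nat.card A) A B rfl hmain
  refine ⟨h, ?_⟩
  intro α β γ hγ hfeq
  have hk : ((α, β, γ) : Equiv.Perm A × Equiv.Perm B × Equiv.Perm C) ∈ K := ⟨hγ, hfeq⟩
  apply Equiv.ext
  intro a
  have h5 : h ((⟨(α, β, γ), hk⟩ : ↥K) • (α.symm a)) =
      (⟨(α, β, γ), hk⟩ : ↥K) • h (α.symm a) := hh _ _
  have h6 : h (α (α.symm a)) = β (h (α.symm a)) := h5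
  rw [Equiv.apply_symm_apply] at h6
  exact h6.symm

def polySet (a : ℕ → ℕ) (N : ℕ) (C : Type) : Type :=
  (k : Fin (N + 1)) × (Fin (a k.1) × (Fin k.1 → C))

instance polySet.finite (a : ℕ → ℕ) (N : ℕ) (C : Type) [Finite C] :
    Finite (polySet a N C) := by
  unfold polySet; infer_instance

instance polyAction {G : Type} [Group G] (a : ℕ → ℕ) (N : ℕ) {C : Type} [MulAction G C] :
    MulAction G (polySet a N C) where
  smul g x := ⟨x.1, x.2.1, fun i => g • x.2.2 i⟩
  one_smul := by
    rintro ⟨k, m, u⟩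
    show (⟨k, m, fun i => (1 : G) • u i⟩ : polySet a N C) = ⟨k, m, u⟩
    simp only [one_smul]
  mul_smul := by
    intro g h
    rintro ⟨k, m, u⟩
    show (⟨k, m, fun i => (g * h) • u i⟩ : polySet a N C) = ⟨k, m, fun i => g • h • u i⟩
    simp only [mul_smul]

lemma polyFix {G : Type} [Group G] (a : ℕ → ℕ) (N : ℕ) {C : Type} [Finite C]
    [MulAction G C] (S : Set G) :
    Nat.card ↥(fixPts S (polySet a N C))
      = ∑ k ∈ Finset.range (N + 1), a k * Nat.card ↥(fixPts S C) ^ k := by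
  have hfixchar : ∀ (k : Fin (N + 1)) (m : Fin (a k.1)) (u : Fin k.1 → C),
      ((⟨k, m, u⟩ : polySet a N C) ∈ fixPts S (polySet a N C)) ↔
        ∀ i, u i ∈ fixPts S C := by
    intro k m u
    constructor
    · intro hx i g hg
      have h1 : (⟨k, m, fun i => g • u i⟩ : polySet a N C) = ⟨k, m, u⟩ := hx g hg
      have h2 : ((m, fun i => g • u i) : Fin (a k.1) × (Fin k.1 → C)) = (m, u) :=
        @sigma_mk_injective (Fin (N + 1)) (fun k => Fin (a k.1) × (Fin k.1 → C)) k _ _ h1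
      exact congrFun (congrArg Prod.snd h2) i
    · intro hu g hg
      show (⟨k, m, fun i => g • u i⟩ : polySet a N C) = ⟨k, m, u⟩
      have : (fun i => g • u i) = u := funext fun i => hu i g hg
      rw [this]
  let E : ↥(fixPts S (polySet a N C)) ≃
      ((k : Fin (N + 1)) × (Fin (a k.1) × (Fin k.1 → ↥(fixPts S C)))) :=
    { toFun := fun x => ⟨x.1.1, x.1.2.1, fun i =>
        ⟨x.1.2.2 i, (hfixchar x.1.1 x.1.2.1 x.1.2.2).mp x.2 i⟩⟩
      invFun := fun y => ⟨⟨y.1, y.2.1, fun i => (y.2.2 i).1⟩,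
        (hfixchar _ _ _).mpr (fun i => (y.2.2 i).2)⟩
      left_inv := fun x => rfl
      right_inv := fun y => rfl }
  haveI : Fintype ↥(fixPts S C) := Fintype.ofFinite _
  rw [Nat.card_congr E, Nat.card_eq_fintype_card, Fintype.card_sigma,
    ← Fin.sum_univ_eq_sum_range (fun k => a k * Nat.card ↥(fixPts S C) ^ k) (N + 1)]
  congr 1
  funext k
  rw [Fintype.card_prod, Fintype.card_fin, Fintype.card_fun, Fintype.card_fin,
    Nat.card_eq_fintype_card]

section PolyArith
open Polynomial

noncomputable def thePoly (N : ℕ) : Polynomial ℤ :=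
  ∏ j ∈ Finset.range N, (X - C ((j : ℤ) + 1))

lemma thePoly_natDegree (N : ℕ) : (thePoly N).natDegree = N := by
  rw [thePoly, Polynomial.natDegree_prod_of_monic _ _ (fun i _ => monic_X_sub_C _)]
  simp only [natDegree_X_sub_C]
  rw [Finset.sum_const, Finset.card_range, smul_eq_mul, mul_one]

noncomputable def ak (N k : ℕ) : ℕ := ((thePoly N).coeff k).toNat
noncomputable def bk (N k : ℕ) : ℕ := (-((thePoly N).coeff k)).toNat

lemma ak_sub_bk (N k : ℕ) : ((ak N k : ℤ)) - ((bk N k : ℤ)) = (thePoly N).coeff k := by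
  have := Int.toNat_sub_toNat_neg ((thePoly N).coeff k)
  simpa [ak, bk] using this

lemma thePoly_eval_zero_ne (N : ℕ) : (thePoly N).eval 0 ≠ 0 := by
  rw [thePoly, eval_prod]
  apply Finset.prod_ne_zero_iff.mpr
  intro j hj
  simp only [eval_sub, eval_X, eval_C]
  omega

lemma ak_ne_bk_zero (N : ℕ) : ak N 0 ≠ bk N 0 := by
  intro h
  have h1 := ak_sub_bk N 0
  rw [h] at h1
  have h2 : (thePoly N).coeff 0 = 0 := by omega
  rw [Polynomial.coeff_zero_eq_eval_zero] at h2
  exact thePoly_eval_zero_ne N h2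

lemma sums_eq (N z : ℕ) (h1 : 1 ≤ z) (h2 : z ≤ N) :
    ∑ k ∈ Finset.range (N + 1), ak N k * z ^ k
      = ∑ k ∈ Finset.range (N + 1), bk N k * z ^ k := by
  have heval : (thePoly N).eval (z : ℤ) = 0 := by
    rw [thePoly, eval_prod]
    refine Finset.prod_eq_zero (Finset.mem_range.mpr (show z - 1 < N by omega)) ?_
    simp only [eval_sub, eval_X, eval_C]
    omega
  have hsum : ∑ k ∈ Finset.range (N + 1), ((ak N k : ℤ) - (bk N k : ℤ)) * (z : ℤ) ^ k
      = 0 := by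
    have hdeg : (thePoly N).natDegree < N + 1 := by rw [thePoly_natDegree]; omega
    calc ∑ k ∈ Finset.range (N + 1), ((ak N k : ℤ) - (bk N k : ℤ)) * (z : ℤ) ^ k
        = ∑ k ∈ Finset.range (N + 1), (thePoly N).coeff k * (z : ℤ) ^ k :=
          Finset.sum_congr rfl (fun k _ => by rw [ak_sub_bk])
      _ = (thePoly N).eval (z : ℤ) := (Polynomial.eval_eq_sum_range' hdeg _).symm
      _ = 0 := heval
  have hsum2 : ((∑ k ∈ Finset.range (N + 1), ak N k * z ^ k : ℕ) : ℤ)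
      = ((∑ k ∈ Finset.range (N + 1), bk N k * z ^ k : ℕ) : ℤ) := by
    push_cast
    refine sub_eq_zero.mp ?_
    rw [← Finset.sum_sub_distrib]
    calc ∑ k ∈ Finset.range (N + 1),
          ((ak N k : ℤ) * (z : ℤ) ^ k - (bk N k : ℤ) * (z : ℤ) ^ k)
        = ∑ k ∈ Finset.range (N + 1), ((ak N k : ℤ) - (bk N k : ℤ)) * (z : ℤ) ^ k :=
          Finset.sum_congr rfl (fun k _ => by ring)
      _ = 0 := hsum
  exact Nat.cast_injective hsum2

lemma sum_at_zero (N : ℕ) (a : ℕ → ℕ) :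
    ∑ k ∈ Finset.range (N + 1), a k * 0 ^ k = a 0 := by
  rw [Finset.sum_eq_single 0]
  · simp
  · intro k _ hk
    rw [zero_pow hk]; ring
  · intro h; exact absurd (Finset.mem_range.mpr (by omega)) h

end PolyArith

theorem feldman_propp_finitely_cancelling_iff {C : Type} [Finite C] [Nonempty C]
    (Γ : Subgroup (Equiv.Perm C)) :
    FinitelyCancelling C Γ ↔ ∃ c : C, ∀ γ ∈ Γ, γ c = c := by
  constructor
  · -- finitely cancelling implies a global fixed point
    intro FC
    by_contra hno
    push_neg at hno
    set N := Nat.card C with hN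
    letI iC : MulAction ↥Γ C :=
      { smul := fun g c => g.1 c, one_smul := fun c => rfl, mul_smul := fun g h c => rfl }
    have hz_le : ∀ S : Set ↥Γ, Nat.card ↥(fixPts S C) ≤ N := by
      intro S
      rw [hN]
      exact Nat.card_le_card_of_injective _ Subtype.val_injective
    have hmarks : ∀ S : Set ↥Γ,
        (fixPts S (polySet (ak N) N C × C)).ncard
          = (fixPts S (polySet (bk N) N C × C)).ncard := by
      intro S
      rw [← Nat.card_coe_set_eq, ← Nat.card_coe_set_eq,
        Nat.card_congr (fixProdEquiv S), Nat.card_congr (fixProdEquiv S),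
        Nat.card_prod, Nat.card_prod, polyFix, polyFix]
      rcases Nat.eq_zero_or_pos (Nat.card ↥(fixPts S C)) with h0 | hpos
      · rw [h0]; simp
      · rw [sums_eq N _ hpos (hz_le S)]
    obtain ⟨e, he⟩ := exists_equivariant_equiv (G := ↥Γ)
      (Nat.card (polySet (ak N) N C × C))
      (polySet (ak N) N C × C) (polySet (bk N) N C × C) rfl hmarks
    obtain ⟨h, hq⟩ := FC (polySet (ak N) N C) (polySet (bk N) N C)
      inferInstance inferInstance e
    have heq : ∀ (g : ↥Γ) (x : polySet (ak N) N C), h (g • x) = g • h x := by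
      intro g x
      have htr : transform e (MulAction.toPerm g) (MulAction.toPerm g) g.1 = e := by
        apply Equiv.ext
        rintro ⟨x₁, c⟩
        have hstep : transform e (MulAction.toPerm g) (MulAction.toPerm g) g.1 (x₁, c)
            = (g • (e (g⁻¹ • (x₁, c))).1, g • (e (g⁻¹ • (x₁, c))).2) := rfl
        rw [hstep, he g⁻¹ (x₁, c)]
        show (g • g⁻¹ • (e (x₁, c)).1, g • g⁻¹ • (e (x₁, c)).2) = e (x₁, c)
        rw [smul_inv_smul, smul_inv_smul]
      have hqq := hq (MulAction.toPerm g) (MulAction.toPerm g) g.1 g.2 htr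
      have h5 := congrArg (fun e' : polySet (ak N) N C ≃ polySet (bk N) N C
        => e' (g • x)) hqq
      have h6 : (MulAction.toPerm g : Equiv.Perm (polySet (bk N) N C))
          (h ((MulAction.toPerm g : Equiv.Perm (polySet (ak N) N C)).symm (g • x)))
          = h (g • x) := h5
      have h7 : (MulAction.toPerm g : Equiv.Perm (polySet (ak N) N C)).symm (g • x)
          = x := inv_smul_smul g x
      rw [h7] at h6
      exact h6.symm
    -- compare fixed points under all of Γ
    have hfixglob := Nat.card_congr (fixEquiv h heq (Set.univ : Set ↥Γ))
    rw [polyFix, polyFix] at hfixglob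
    have hCfix : fixPts (Set.univ : Set ↥Γ) C = (∅ : Set C) := by
      ext c
      simp only [Set.mem_empty_iff_false, iff_false]
      intro hc
      obtain ⟨γ, hγ, hne⟩ := hno c
      exact hne (hc ⟨γ, hγ⟩ (Set.mem_univ _))
    rw [hCfix] at hfixglob
    have hzero : Nat.card ↥(∅ : Set C) = 0 := by simp
    rw [hzero, sum_at_zero, sum_at_zero] at hfixglob
    exact ak_ne_bk_zero N hfixglob
  · -- a global fixed point implies finitely cancelling
    intro hc A B hA hB f
    obtain ⟨h, hh⟩ := dir1 Γ hc A B hA hB f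
    exact ⟨h, fun α β γ hγ hfeq => hh α β γ hγ hfeq⟩
end

section
/- Let C be a nonempty finite set and let A, B be finite sets. Then there exists a map f ↦ f̄ assigning to each bijection f : A × C → B × C a parallel bijection f̄ : A × C → B × C (that is, f̄(a,c) = (f̄⟨c⟩(a), c) where each f̄⟨c⟩ : A → B is a bijection), which is fully equivariant: for every (α, β, γ) ∈ S(A) × S(B) × S(C), the parallelization of f_{α,β,γ} equals (f̄)_{α,β,γ}. -/
lemma exists_equivariant {G X Y : Type*} [Group G]
    (ρ : G →* Equiv.Perm X) (σ : G →* Equiv.Perm Y)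
    (h : ∀ x : X, ∃ y : Y, ∀ g : G, ρ g x = x → σ g y = y) :
    ∃ P : X → Y, ∀ (g : G) (x : X), P (ρ g x) = σ g (P x) := by
  classical
  let s : Setoid X := ⟨fun x y => ∃ g, ρ g x = y, by
    constructor
    · intro x; exact ⟨1, by simp⟩
    · rintro x y ⟨g, rfl⟩; exact ⟨g⁻¹, by simp⟩
    · rintro x y z ⟨g, rfl⟩ ⟨g', rfl⟩; exact ⟨g' * g, by simp⟩⟩
  have ex : ∀ x : X, ∃ g, ρ g (Quotient.out (s := s) (Quotient.mk s x)) = x :=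
    fun x => Quotient.exact (s := s) (Quotient.out_eq _)
  let gx : X → G := fun x => (ex x).choose
  let y0 : X → Y := fun x => (h (Quotient.out (s := s) (Quotient.mk s x))).choose
  refine ⟨fun x => σ (gx x) (y0 x), ?_⟩
  intro g x
  have hq : Quotient.mk s (ρ g x) = Quotient.mk s x := Quotient.sound ⟨g⁻¹, by simp⟩
  set o := Quotient.out (s := s) (Quotient.mk s x) with ho
  have hy0 : y0 (ρ g x) = y0 x := by simp only [y0, hq]
  have hfix : ∀ g' : G, ρ g' o = o → σ g' ((h o).choose) = (h o).choose :=
    (h o).choose_spec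
  have h1 : ρ (gx (ρ g x)) (Quotient.out (s := s) (Quotient.mk s (ρ g x))) = ρ g x :=
    (ex (ρ g x)).choose_spec
  rw [hq] at h1
  have h2 : ρ (gx x) o = x := (ex x).choose_spec
  have hgo : ρ (g * gx x) o = ρ g x := by simp [map_mul, h2]
  have h1' : ρ (gx (ρ g x)) o = ρ g x := by rw [ho]; exact h1
  have key : ρ ((g * gx x)⁻¹ * gx (ρ g x)) o = o := by
    calc ρ ((g * gx x)⁻¹ * gx (ρ g x)) o
        = ρ (g * gx x)⁻¹ (ρ (gx (ρ g x)) o) := by simp [map_mul]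
      _ = ρ (g * gx x)⁻¹ (ρ (g * gx x) o) := by rw [h1', hgo]
      _ = o := by simp [map_inv]
  have hys := hfix _ key
  have hfin : σ (gx (ρ g x)) ((h o).choose) = σ (g * gx x) ((h o).choose) := by
    have := congrArg (σ (g * gx x)) hys
    simpa [map_mul, map_inv] using this
  simp only [hy0]
  show σ (gx (ρ g x)) (y0 x) = σ g (σ (gx x) (y0 x))
  simp only [y0, ← ho]
  rw [hfin]
  simp [map_mul]



def fixedPts {G A : Type*} [Group G] (ρ : G →* Equiv.Perm A) (K : Subgroup G) : Set A :=
  {a | ∀ g ∈ K, ρ g a = a}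

def stabOf {G A : Type*} [Group G] (ρ : G →* Equiv.Perm A) (a : A) : Subgroup G :=
  Subgroup.comap ρ (MulAction.stabilizer (Equiv.Perm A) a)

lemma mem_stabOf {G A : Type*} [Group G] {ρ : G →* Equiv.Perm A} {a : A} {g : G} :
    g ∈ stabOf ρ a ↔ ρ g a = a := Iff.rfl

def restrictHom {G A : Type*} [Group G] (ρ : G →* Equiv.Perm A) (s : Set A)
    (hs : ∀ (g : G) (x : A), x ∈ s ↔ ρ g x ∈ s) : G →* Equiv.Perm ↥s where
  toFun g := (ρ g).subtypePerm (fun x => (hs g x).symm)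
  map_one' := by
    ext x
    simp [Equiv.Perm.subtypePerm_apply]
  map_mul' g h := by
    ext x
    simp [Equiv.Perm.subtypePerm_apply]
    rfl

lemma card_fixed_restrict {G A : Type*} [Group G] (ρ : G →* Equiv.Perm A) (s : Set A)
    (hs : ∀ (g : G) (x : A), x ∈ s ↔ ρ g x ∈ s) (K : Subgroup G) :
    Nat.card (fixedPts (restrictHom ρ s hs) K) = Nat.card ((fixedPts ρ K ∩ s : Set A)) := by
  apply Nat.card_congr
  refine ⟨fun x => ⟨x.1.1, ⟨fun g hg => ?_, x.1.2⟩⟩, fun y => ⟨⟨y.1, y.2.2⟩, fun g hg => ?_⟩,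
    fun x => rfl, fun y => rfl⟩
  · have := x.2 g hg
    exact congrArg Subtype.val this
  · exact Subtype.ext (y.2.1 g hg)

lemma subgroup_eq_of_le_of_card_le {G : Type*} [Group G] [Finite G] {K L : Subgroup G}
    (h : K ≤ L) (hc : Nat.card L ≤ Nat.card K) : K = L := by
  have hs : (K : Set G) ⊆ (L : Set G) := h
  have := Set.eq_of_subset_of_ncard_le hs
    (by rwa [← Nat.card_coe_set_eq, ← Nat.card_coe_set_eq]) (Set.toFinite _)
  exact SetLike.ext' this

lemma fixedPts_bot {G A : Type*} [Group G] (ρ : G →* Equiv.Perm A) :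
    fixedPts ρ ⊥ = Set.univ := by
  ext a
  simp only [fixedPts, Set.mem_setOf_eq, Subgroup.mem_bot, Set.mem_univ, iff_true]
  rintro g rfl
  simp

lemma marks_iso_empty {G A B : Type} [Group G] [Finite A] [Finite B]
    (ρ : G →* Equiv.Perm A) (σ : G →* Equiv.Perm B)
    (hm : Nat.card (fixedPts ρ ⊥) = Nat.card (fixedPts σ ⊥)) (hA : IsEmpty A) :
    ∃ e : A ≃ B, ∀ (g : G) (a : A), e (ρ g a) = σ g (e a) := by
  have hB0 : Nat.card B = 0 := by
    calc Nat.card B = Nat.card (fixedPts σ ⊥) := by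
          rw [fixedPts_bot]; exact (Nat.card_congr (Equiv.Set.univ B)).symm
      _ = Nat.card (fixedPts ρ ⊥) := hm.symm
      _ = Nat.card A := by rw [fixedPts_bot]; exact Nat.card_congr (Equiv.Set.univ A)
      _ = 0 := Nat.card_of_isEmpty
  have hB : IsEmpty B :=
    (Nat.card_eq_zero.mp hB0).resolve_right (fun h => absurd ‹Finite B› h.not_finite)
  exact ⟨Equiv.equivOfIsEmpty A B, fun g a => isEmptyElim a⟩

lemma card_fixed_congr {G X Y : Type*} [Group G] (ρ : G →* Equiv.Perm X)
    (σ : G →* Equiv.Perm Y) (e : X ≃ Y) (he : ∀ (g : G) (x : X), e (ρ g x) = σ g (e x))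
    (K : Subgroup G) : Nat.card (fixedPts ρ K) = Nat.card (fixedPts σ K) := by
  apply Nat.card_congr
  refine ⟨fun x => ⟨e x.1, fun g hg => by rw [← he, x.2 g hg]⟩,
    fun y => ⟨e.symm y.1, fun g hg => e.injective ?_⟩,
    fun x => Subtype.ext (e.symm_apply_apply _), fun y => Subtype.ext (e.apply_symm_apply _)⟩
  rw [he, Equiv.apply_symm_apply]
  exact y.2 g hg

lemma card_partition {T : Type*} [Finite T] (s t : Set T) :
    Nat.card s = Nat.card (s ∩ t : Set T) + Nat.card (s ∩ tᶜ : Set T) := by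
  rw [Nat.card_coe_set_eq, Nat.card_coe_set_eq, Nat.card_coe_set_eq, ← Set.diff_eq]
  exact (Set.ncard_inter_add_ncard_diff_eq_ncard s t (Set.toFinite s)).symm

lemma marks_iso_aux (n : ℕ) : ∀ {G A B : Type} [Group G] [Finite G] [Finite A] [Finite B]
    (ρ : G →* Equiv.Perm A) (σ : G →* Equiv.Perm B),
    (∀ K : Subgroup G, Nat.card (fixedPts ρ K) = Nat.card (fixedPts σ K)) →
    Nat.card A ≤ n →
    ∃ e : A ≃ B, ∀ (g : G) (a : A), e (ρ g a) = σ g (e a) := by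
  induction n with
  | zero =>
    intro G A B _ _ _ _ ρ σ hm hcard
    have hA : IsEmpty A :=
      (Nat.card_eq_zero.mp (Nat.le_zero.mp hcard)).resolve_right
        (fun h => absurd ‹Finite A› h.not_finite)
    exact marks_iso_empty ρ σ (hm ⊥) hA
  | succ n ih =>
    intro G A B _ _ _ _ ρ σ hm hcard
    classical
    by_cases hA : IsEmpty A
    · exact marks_iso_empty ρ σ (hm ⊥) hA
    have hAne : Nonempty A := not_isEmpty_iff.mp hA
    have finSub : Finite (Subgroup G) :=
      Finite.of_injective (fun K : Subgroup G => (K : Set G)) (fun _ _ h => SetLike.ext' h)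
    obtain ⟨a0⟩ := hAne
    have hbot : (fixedPts ρ ⊥).Nonempty := ⟨a0, by rw [fixedPts_bot]; trivial⟩
    have hne : Nonempty {K : Subgroup G // (fixedPts ρ K).Nonempty} := ⟨⟨⊥, hbot⟩⟩
    obtain ⟨⟨K, hKne⟩, hKmax⟩ :=
      Finite.exists_max (fun K : {K : Subgroup G // (fixedPts ρ K).Nonempty} => Nat.card K.1)
    have posA : ∀ {T : Type} [Finite T] (s : Set T), s.Nonempty → 0 < Nat.card s := by
      intro T _ s hs
      have := Set.nonempty_coe_sort.mpr hs
      exact Nat.card_pos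
    have posA' : ∀ {T : Type} [Finite T] (s : Set T), 0 < Nat.card s → s.Nonempty := by
      intro T _ s hs
      exact Set.nonempty_coe_sort.mp (Nat.card_pos_iff.mp hs).1
    have hAfix_of_B : ∀ L : Subgroup G, (fixedPts σ L).Nonempty → (fixedPts ρ L).Nonempty := by
      intro L hL
      exact posA' _ (by rw [hm L]; exact posA _ hL)
    have hmaxB : ∀ L : Subgroup G, (fixedPts σ L).Nonempty → Nat.card L ≤ Nat.card K :=
      fun L hL => hKmax ⟨L, hAfix_of_B L hL⟩
    have hBK : (fixedPts σ K).Nonempty := posA' _ (by rw [← hm K]; exact posA _ hKne)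
    obtain ⟨a, ha⟩ := hKne
    obtain ⟨b, hb⟩ := hBK
    have stabA : stabOf ρ a = K := by
      refine (subgroup_eq_of_le_of_card_le (fun g hg => mem_stabOf.mpr (ha g hg)) ?_).symm
      exact hKmax ⟨stabOf ρ a, ⟨a, fun g hg => hg⟩⟩
    have stabB : stabOf σ b = K := by
      refine (subgroup_eq_of_le_of_card_le (fun g hg => mem_stabOf.mpr (hb g hg)) ?_).symm
      exact hmaxB (stabOf σ b) ⟨b, fun g hg => hg⟩
    have wdAB : ∀ g g' : G, ρ g a = ρ g' a → σ g b = σ g' b := by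
      intro g g' hgg
      have h1 : g'⁻¹ * g ∈ stabOf ρ a := by
        rw [mem_stabOf]; simp [map_mul, hgg]
      have h2 : σ (g'⁻¹ * g) b = b := by
        rw [stabA, ← stabB] at h1; exact h1
      calc σ g b = σ (g' * (g'⁻¹ * g)) b := by rw [mul_inv_cancel_left]
        _ = σ g' (σ (g'⁻¹ * g) b) := by simp [map_mul]
        _ = σ g' b := by rw [h2]
    have wdBA : ∀ g g' : G, σ g b = σ g' b → ρ g a = ρ g' a := by
      intro g g' hgg
      have h1 : g'⁻¹ * g ∈ stabOf σ b := by
        rw [mem_stabOf]; simp [map_mul, hgg]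
      have h2 : ρ (g'⁻¹ * g) a = a := by
        rw [stabB, ← stabA] at h1; exact h1
      calc ρ g a = ρ (g' * (g'⁻¹ * g)) a := by rw [mul_inv_cancel_left]
        _ = ρ g' (ρ (g'⁻¹ * g) a) := by simp [map_mul]
        _ = ρ g' a := by rw [h2]
    set Oa : Set A := Set.range (fun g => ρ g a) with hOa
    set Ob : Set B := Set.range (fun g => σ g b) with hOb
    have OaInv : ∀ (g : G) (x : A), x ∈ Oa ↔ ρ g x ∈ Oa := by
      intro g x
      constructor
      · rintro ⟨g', rfl⟩; exact ⟨g * g', by simp [map_mul]⟩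
      · rintro ⟨g', hg'⟩
        refine ⟨g⁻¹ * g', ?_⟩
        simp only [map_mul, map_inv, Equiv.Perm.coe_mul, Function.comp_apply, hg']
        simp
    have ObInv : ∀ (g : G) (y : B), y ∈ Ob ↔ σ g y ∈ Ob := by
      intro g y
      constructor
      · rintro ⟨g', rfl⟩; exact ⟨g * g', by simp [map_mul]⟩
      · rintro ⟨g', hg'⟩
        refine ⟨g⁻¹ * g', ?_⟩
        simp only [map_mul, map_inv, Equiv.Perm.coe_mul, Function.comp_apply, hg']
        simp
    let φfun : ↥Oa → B := fun x => σ x.2.choose b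
    have hφmem : ∀ x : ↥Oa, φfun x ∈ Ob := fun x => ⟨x.2.choose, rfl⟩
    let ψfun : ↥Ob → A := fun y => ρ y.2.choose a
    have hψmem : ∀ y : ↥Ob, ψfun y ∈ Oa := fun y => ⟨y.2.choose, rfl⟩
    let φ : ↥Oa ≃ ↥Ob :=
      { toFun := fun x => ⟨φfun x, hφmem x⟩
        invFun := fun y => ⟨ψfun y, hψmem y⟩
        left_inv := by
          intro x
          apply Subtype.ext
          have h1 : σ (hφmem x).choose b = σ x.2.choose b := (hφmem x).choose_spec
          have h2 := wdBA _ _ h1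
          show ρ (hφmem x).choose a = ↑x
          rw [h2]; exact x.2.choose_spec
        right_inv := by
          intro y
          apply Subtype.ext
          have h1 : ρ (hψmem y).choose a = ρ y.2.choose a := (hψmem y).choose_spec
          have h2 := wdAB _ _ h1
          show σ (hψmem y).choose b = ↑y
          rw [h2]; exact y.2.choose_spec }
    have φ_equiv : ∀ (g : G) (x : ↥Oa) (hgx : ρ g ↑x ∈ Oa),
        φfun ⟨ρ g ↑x, hgx⟩ = σ g (φfun x) := by
      intro g x hgx
      have h1 : ρ hgx.choose a = ρ g ↑x := hgx.choose_spec
      have h2 : ρ (g * x.2.choose) a = ρ g ↑x := by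
        simp only [map_mul, Equiv.Perm.coe_mul, Function.comp_apply, x.2.choose_spec]
      have h3 := wdAB _ _ (h1.trans h2.symm)
      show σ hgx.choose b = σ g (σ x.2.choose b)
      rw [h3]
      simp [map_mul]
    have OaInv' : ∀ (g : G) (x : A), x ∈ Oaᶜ ↔ ρ g x ∈ Oaᶜ :=
      fun g x => not_iff_not.mpr (OaInv g x)
    have ObInv' : ∀ (g : G) (y : B), y ∈ Obᶜ ↔ σ g y ∈ Obᶜ :=
      fun g y => not_iff_not.mpr (ObInv g y)
    let ρo := restrictHom ρ Oa OaInv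
    let σo := restrictHom σ Ob ObInv
    let ρ' := restrictHom ρ Oaᶜ OaInv'
    let σ' := restrictHom σ Obᶜ ObInv'
    have φequiv' : ∀ (g : G) (x : ↥Oa), φ (ρo g x) = σo g (φ x) := by
      intro g x
      apply Subtype.ext
      show φfun (ρo g x) = σ g (φfun x)
      have hx : (ρo g x : A) = ρ g ↑x := rfl
      have : ρo g x = ⟨ρ g ↑x, (OaInv g ↑x).mp x.2⟩ := Subtype.ext hx
      rw [this]
      exact φ_equiv g x _
    have hm' : ∀ K' : Subgroup G, Nat.card (fixedPts ρ' K') = Nat.card (fixedPts σ' K') := by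
      intro K'
      have eA : Nat.card (fixedPts ρ' K') = Nat.card ((fixedPts ρ K' ∩ Oaᶜ : Set A)) :=
        card_fixed_restrict ρ Oaᶜ OaInv' K'
      have eB : Nat.card (fixedPts σ' K') = Nat.card ((fixedPts σ K' ∩ Obᶜ : Set B)) :=
        card_fixed_restrict σ Obᶜ ObInv' K'
      have eOrb : Nat.card (fixedPts ρo K') = Nat.card (fixedPts σo K') :=
        card_fixed_congr ρo σo φ φequiv' K'
      have eOa : Nat.card (fixedPts ρo K') = Nat.card ((fixedPts ρ K' ∩ Oa : Set A)) :=
        card_fixed_restrict ρ Oa OaInv K'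
      have eOb : Nat.card (fixedPts σo K') = Nat.card ((fixedPts σ K' ∩ Ob : Set B)) :=
        card_fixed_restrict σ Ob ObInv K'
      have pA := card_partition (fixedPts ρ K') Oa
      have pB := card_partition (fixedPts σ K') Ob
      have hK' := hm K'
      omega
    have haOa : a ∈ Oa := ⟨1, by simp⟩
    have hcard' : Nat.card ↥(Oaᶜ) ≤ n := by
      have hss : Oaᶜ ⊂ Set.univ := by
        rw [Set.ssubset_univ_iff]
        intro h
        have : a ∈ Oaᶜ := h ▸ Set.mem_univ a
        exact this haOa
      have := Set.ncard_lt_ncard hss (Set.toFinite _)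
      rw [Set.ncard_univ] at this
      rw [Nat.card_coe_set_eq]
      omega
    obtain ⟨e', he'⟩ := ih ρ' σ' hm' hcard'
    have : DecidablePred (· ∈ Oa) := Classical.decPred _
    refine ⟨(Equiv.Set.sumCompl Oa).symm.trans ((φ.sumCongr e').trans (Equiv.Set.sumCompl Ob)), ?_⟩
    intro g x
    by_cases hx : x ∈ Oa
    · have hgx : ρ g x ∈ Oa := (OaInv g x).mp hx
      rw [Equiv.trans_apply, Equiv.trans_apply, Equiv.Set.sumCompl_symm_apply_of_mem hgx,
        Equiv.trans_apply, Equiv.trans_apply, Equiv.Set.sumCompl_symm_apply_of_mem hx]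
      simp only [Equiv.sumCongr_apply, Sum.map_inl, Equiv.Set.sumCompl_apply_inl]
      exact φ_equiv g ⟨x, hx⟩ hgx
    · have hgx : ρ g x ∉ Oa := fun h => hx ((OaInv g x).mpr h)
      rw [Equiv.trans_apply, Equiv.trans_apply, Equiv.Set.sumCompl_symm_apply_of_notMem hgx,
        Equiv.trans_apply, Equiv.trans_apply, Equiv.Set.sumCompl_symm_apply_of_notMem hx]
      simp only [Equiv.sumCongr_apply, Sum.map_inr, Equiv.Set.sumCompl_apply_inr]
      have hr : (⟨ρ g x, hgx⟩ : ↥(Oaᶜ)) = ρ' g ⟨x, hx⟩ := rfl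
      rw [hr, he' g ⟨x, hx⟩]
      rfl

lemma marks_iso {G A B : Type} [Group G] [Finite G] [Finite A] [Finite B]
    (ρ : G →* Equiv.Perm A) (σ : G →* Equiv.Perm B)
    (hm : ∀ K : Subgroup G, Nat.card (fixedPts ρ K) = Nat.card (fixedPts σ K)) :
    ∃ e : A ≃ B, ∀ (g : G) (a : A), e (ρ g a) = σ g (e a) :=
  marks_iso_aux (Nat.card A) ρ σ hm le_rfl

section glue
variable {A B C : Type}

lemma transform_apply (f : A × C ≃ B × C) (α : Equiv.Perm A) (β : Equiv.Perm B)
    (γ : Equiv.Perm C) (a : A) (c : C) :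
    transform f α β γ (a, c) = (β (f (α⁻¹ a, γ⁻¹ c)).1, γ (f (α⁻¹ a, γ⁻¹ c)).2) := rfl

lemma transform_one (f : A × C ≃ B × C) : transform f 1 1 1 = f := by
  apply Equiv.ext
  rintro ⟨a, c⟩
  simp [transform_apply]

lemma transform_mul (f : A × C ≃ B × C) (α₁ α₂ : Equiv.Perm A) (β₁ β₂ : Equiv.Perm B)
    (γ₁ γ₂ : Equiv.Perm C) :
    transform (transform f α₂ β₂ γ₂) α₁ β₁ γ₁ = transform f (α₁ * α₂) (β₁ * β₂) (γ₁ * γ₂) := by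
  apply Equiv.ext
  rintro ⟨a, c⟩
  simp [transform_apply, mul_inv_rev]

lemma transformQ_one (h : A ≃ B) : transformQ h 1 1 = h := by
  ext a; simp [transformQ, Equiv.Perm.one_symm]

lemma transformQ_mul (h : A ≃ B) (α₁ α₂ : Equiv.Perm A) (β₁ β₂ : Equiv.Perm B) :
    transformQ (transformQ h α₂ β₂) α₁ β₁ = transformQ h (α₁ * α₂) (β₁ * β₂) := by
  ext a; simp [transformQ, ← Equiv.Perm.inv_def, mul_inv_rev]

def bigPhi : (Equiv.Perm A × Equiv.Perm B × Equiv.Perm C) →* Equiv.Perm (A × C ≃ B × C) where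
  toFun g :=
    { toFun := fun f => transform f g.1 g.2.1 g.2.2
      invFun := fun f => transform f g.1⁻¹ g.2.1⁻¹ g.2.2⁻¹
      left_inv := fun f => by
        show transform (transform f _ _ _) _ _ _ = f
        rw [transform_mul]; simp [transform_one]
      right_inv := fun f => by
        show transform (transform f _ _ _) _ _ _ = f
        rw [transform_mul]; simp [transform_one] }
  map_one' := Equiv.ext fun f => transform_one f
  map_mul' g h := Equiv.ext fun f => (transform_mul f g.1 h.1 g.2.1 h.2.1 g.2.2 h.2.2).symm

def tqHom : (Equiv.Perm A × Equiv.Perm B) →* Equiv.Perm (A ≃ B) where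
  toFun g :=
    { toFun := fun h => transformQ h g.1 g.2
      invFun := fun h => transformQ h g.1⁻¹ g.2⁻¹
      left_inv := fun h => by
        show transformQ (transformQ h _ _) _ _ = h
        rw [transformQ_mul]; simp [transformQ_one]
      right_inv := fun h => by
        show transformQ (transformQ h _ _) _ _ = h
        rw [transformQ_mul]; simp [transformQ_one] }
  map_one' := Equiv.ext fun h => transformQ_one h
  map_mul' g h := Equiv.ext fun f => (transformQ_mul f g.1 h.1 g.2 h.2).symm

def prodHom {G' : Type*} [Group G'] (π₁ : G' →* Equiv.Perm A) (π₂ : G' →* Equiv.Perm C) :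
    G' →* Equiv.Perm (A × C) where
  toFun g := Equiv.prodCongr (π₁ g) (π₂ g)
  map_one' := by ext p <;> simp
  map_mul' g h := by ext p <;> simp

end glue


lemma card_fixedPts_prod {G' : Type*} {A C : Type} [Group G'] (π₁ : G' →* Equiv.Perm A)
    (π₂ : G' →* Equiv.Perm C) (K : Subgroup G') :
    Nat.card (fixedPts (prodHom π₁ π₂) K)
      = Nat.card (fixedPts π₁ K) * Nat.card (fixedPts π₂ K) := by
  rw [← Nat.card_prod]
  apply Nat.card_congr
  refine ⟨fun p => (⟨p.1.1, fun g hg => congrArg Prod.fst (p.2 g hg)⟩,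
      ⟨p.1.2, fun g hg => congrArg Prod.snd (p.2 g hg)⟩),
    fun q => ⟨(q.1.1, q.2.1), fun g hg => Prod.ext (q.1.2 g hg) (q.2.2 g hg)⟩,
    fun p => rfl, fun q => rfl⟩

theorem equivariant_parallelization {C : Type} [Finite C] [Nonempty C]
    (A B : Type) [Finite A] [Finite B] :
    ∃ P : (A × C ≃ B × C) → (A × C ≃ B × C),
      (∀ (f : A × C ≃ B × C) (p : A × C), ((P f) p).2 = p.2) ∧
      (∀ (f : A × C ≃ B × C) (c : C),
        Function.Bijective (fun a : A => ((P f) (a, c)).1)) ∧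
      (∀ (f : A × C ≃ B × C) (α : Equiv.Perm A) (β : Equiv.Perm B) (γ : Equiv.Perm C),
        P (transform f α β γ) = transform (P f) α β γ) := by
  classical
  let G0 := Equiv.Perm A × Equiv.Perm B × Equiv.Perm C
  let Par : Set (A × C ≃ B × C) := {p | ∀ q : A × C, (p q).2 = q.2}
  have hParFwd : ∀ (g : G0) (f : A × C ≃ B × C), f ∈ Par → bigPhi g f ∈ Par := by
    intro g f hf q
    obtain ⟨a, c⟩ := q
    show (transform f g.1 g.2.1 g.2.2 (a, c)).2 = c
    rw [transform_apply]
    show g.2.2 ((f (g.1⁻¹ a, g.2.2⁻¹ c)).2) = c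
    rw [hf (g.1⁻¹ a, g.2.2⁻¹ c)]
    exact Equiv.apply_symm_apply _ _
  have hPar : ∀ (g : G0) (f : A × C ≃ B × C), f ∈ Par ↔ bigPhi g f ∈ Par := by
    intro g f
    refine ⟨hParFwd g f, fun h => ?_⟩
    have h2 := hParFwd g⁻¹ _ h
    have h3 : bigPhi g⁻¹ (bigPhi g f) = f := by
      rw [← Equiv.Perm.mul_apply, ← map_mul, inv_mul_cancel, map_one]
      rfl
    rwa [h3] at h2
  let Ψ := restrictHom bigPhi Par hPar
  have hyp : ∀ f : A × C ≃ B × C, ∃ y : ↥Par, ∀ g : G0, bigPhi g f = f → Ψ g y = y := by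
    intro f
    let H : Subgroup G0 := stabOf bigPhi f
    let ρCH : ↥H →* Equiv.Perm C :=
      ((MonoidHom.snd (Equiv.Perm B) (Equiv.Perm C)).comp
        (MonoidHom.snd (Equiv.Perm A) _)).comp H.subtype
    let σQH : ↥H →* Equiv.Perm (A ≃ B) :=
      (tqHom.comp ((MonoidHom.fst (Equiv.Perm A) _).prod
        ((MonoidHom.fst (Equiv.Perm B) (Equiv.Perm C)).comp
          (MonoidHom.snd (Equiv.Perm A) _)))).comp H.subtype
    have hyp2 : ∀ c : C, ∃ h : A ≃ B, ∀ g : ↥H, ρCH g c = c → σQH g h = h := by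
      intro c
      let Kc : Subgroup ↥H := stabOf ρCH c
      let ρA : ↥Kc →* Equiv.Perm A :=
        ((MonoidHom.fst (Equiv.Perm A) _).comp H.subtype).comp Kc.subtype
      let σB : ↥Kc →* Equiv.Perm B :=
        (((MonoidHom.fst (Equiv.Perm B) (Equiv.Perm C)).comp
          (MonoidHom.snd (Equiv.Perm A) _)).comp H.subtype).comp Kc.subtype
      let ρC2 : ↥Kc →* Equiv.Perm C := ρCH.comp Kc.subtype
      have hf : ∀ g : ↥Kc, transform f (ρA g) (σB g) (ρC2 g) = f := fun g => g.1.2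
      have hfp : ∀ (g : ↥Kc) (p : A × C),
          f (prodHom ρA ρC2 g p) = prodHom σB ρC2 g (f p) := by
        intro g p
        have h1 := congrArg (fun e : A × C ≃ B × C =>
          e (Equiv.prodCongr (ρA g) (ρC2 g) p)) (hf g)
        have h2 : transform f (ρA g) (σB g) (ρC2 g) (Equiv.prodCongr (ρA g) (ρC2 g) p)
            = Equiv.prodCongr (σB g) (ρC2 g) (f p) := by
          show Equiv.prodCongr (σB g) (ρC2 g)
            (f ((Equiv.prodCongr (ρA g) (ρC2 g)).symm (Equiv.prodCongr (ρA g) (ρC2 g) p))) = _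
          rw [Equiv.symm_apply_apply]
        exact (h2.symm.trans h1).symm
      have hm : ∀ K : Subgroup ↥Kc,
          Nat.card (fixedPts ρA K) = Nat.card (fixedPts σB K) := by
        intro K
        have hAC := card_fixed_congr (prodHom ρA ρC2) (prodHom σB ρC2) f hfp K
        have eC : 0 < Nat.card (fixedPts ρC2 K) := by
          have hc : c ∈ fixedPts ρC2 K := fun g _ => g.2
          have : Nonempty ↥(fixedPts ρC2 K) := ⟨⟨c, hc⟩⟩
          exact Nat.card_pos
        rw [card_fixedPts_prod, card_fixedPts_prod] at hAC
        exact Nat.eq_of_mul_eq_mul_right eC hAC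
      obtain ⟨e, he⟩ := marks_iso ρA σB hm
      refine ⟨e, ?_⟩
      intro g hg
      have hgK : g ∈ Kc := hg
      apply Equiv.ext
      intro a
      show transformQ e (ρA ⟨g, hgK⟩) (σB ⟨g, hgK⟩) a = e a
      have h3 : e a = σB ⟨g, hgK⟩ (e ((ρA ⟨g, hgK⟩)⁻¹ a)) := by
        have := he ⟨g, hgK⟩ ((ρA ⟨g, hgK⟩)⁻¹ a)
        rwa [← Equiv.Perm.mul_apply, mul_inv_cancel, Equiv.Perm.one_apply] at this
      exact h3.symm
    obtain ⟨q, hq⟩ := exists_equivariant ρCH σQH hyp2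
    let p : A × C ≃ B × C :=
      { toFun := fun x => (q x.2 x.1, x.2)
        invFun := fun y => ((q y.2).symm y.1, y.2)
        left_inv := fun x => by simp
        right_inv := fun y => by simp }
    have hpar : p ∈ Par := fun x => rfl
    refine ⟨⟨p, hpar⟩, ?_⟩
    intro g hg
    apply Subtype.ext
    show bigPhi g p = p
    have hgH : g ∈ H := hg
    apply Equiv.ext
    rintro ⟨a, c⟩
    show transform p g.1 g.2.1 g.2.2 (a, c) = p (a, c)
    rw [transform_apply]
    show (g.2.1 (q (g.2.2⁻¹ c) (g.1⁻¹ a)), g.2.2 (g.2.2⁻¹ c)) = (q c a, c)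
    have hcq : q c = transformQ (q (g.2.2⁻¹ c)) g.1 g.2.1 := by
      have h0 := hq ⟨g, hgH⟩ (g.2.2⁻¹ c)
      have h1 : ρCH ⟨g, hgH⟩ (g.2.2⁻¹ c) = c := Equiv.apply_symm_apply g.2.2 c
      rw [h1] at h0
      exact h0
    refine Prod.ext ?_ (Equiv.apply_symm_apply _ _)
    rw [hcq]
    rfl
  obtain ⟨P₀, hP₀⟩ := exists_equivariant bigPhi Ψ hyp
  refine ⟨fun f => (P₀ f).1, fun f => (P₀ f).2, ?_, ?_⟩
  · intro f c
    constructor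
    · intro a a' h
      have h2 : ((P₀ f).1 (a, c)) = ((P₀ f).1 (a', c)) :=
        Prod.ext h (by rw [(P₀ f).2 (a, c), (P₀ f).2 (a', c)])
      have h3 := (P₀ f).1.injective h2
      exact (Prod.ext_iff.mp h3).1
    · intro b
      set x := (P₀ f).1.symm (b, c) with hxdef
      have hx : (P₀ f).1 x = (b, c) := Equiv.apply_symm_apply _ _
      have hx2 : x.2 = c := by
        have h4 := (P₀ f).2 x
        rw [hx] at h4
        exact h4.symm
      refine ⟨x.1, ?_⟩
      show ((P₀ f).1 (x.1, c)).1 = b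
      rw [← hx2, show (x.1, x.2) = x from rfl, hx]
  · intro f α β γ
    exact congrArg Subtype.val (hP₀ (α, β, γ) f)
end
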